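/- Let K be a compact subset of the plane with empty interior such that R(K) is a normal uniform algebra. Then every Arens–Singer measure for R(K) at a point of K is the unit point mass at that point. -/

import Mathlib

open MeasureTheory

open Polynomial Metric

/-- The uniform algebra `R(K)`: the uniform closure on `K ⊆ ℂ` of the rational
functions with poles off `K`, as a subset of `C(K, ℂ)`. -/
def RK (K : Set ℂ) : Set C(K, ℂ) :=
  closure {f : C(K, ℂ) | ∃ p q : Polynomial ℂ, (∀ z ∈ K, q.eval z ≠ 0) ∧
    ∀ z : K, f z = p.eval (z : ℂ) / q.eval (z : ℂ)}

/-- Rational functions with nonvanishing numerator and denominator approximate. -/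
lemma ratApprox (K : Set ℂ) (hK : IsCompact K) (hint : interior K = ∅)
    (p₀ q₀ : Polynomial ℂ) (hq : ∀ z ∈ K, q₀.eval z ≠ 0) (δ : ℝ) (hδ : 0 < δ) :
    ∃ p q : Polynomial ℂ, (∀ z ∈ K, q.eval z ≠ 0) ∧ (∀ z ∈ K, p.eval z ≠ 0) ∧
      ∀ z ∈ K, ‖p₀.eval z / q₀.eval z - p.eval z / q.eval z‖ < δ := by
  by_cases hp0 : p₀ = 0
  · refine ⟨Polynomial.C ((δ/2 : ℝ) : ℂ), 1, by simp,
      (fun z _ => by simpa using hδ.ne'), ?_⟩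
    intro z hz
    have : ‖(0:ℂ) - ((δ/2:ℝ):ℂ)‖ = δ/2 := by
      simp [abs_of_pos hδ]
    simp only [hp0, eval_zero, zero_div, eval_C, eval_one, div_one, this]
    linarith
  · set U : Set ℂ := {z | q₀.eval z ≠ 0} with hU
    have hUopen : IsOpen U := isOpen_ne.preimage q₀.continuous
    have hKU : K ⊆ U := hq
    obtain ⟨η₀, hη₀pos, hη₀⟩ := hK.exists_cthickening_subset_open hUopen hKU
    set K' : Set ℂ := cthickening η₀ K with hK'def
    have hK' : IsCompact K' := hK.cthickening
    have hgc : ContinuousOn (fun z => p₀.eval z / q₀.eval z) K' :=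
      (p₀.continuous.continuousOn).div (q₀.continuous.continuousOn)
        (fun z hz => hη₀ hz)
    have hguc := hK'.uniformContinuousOn_of_continuous hgc
    rw [Metric.uniformContinuousOn_iff] at hguc
    obtain ⟨d, hdpos, hd⟩ := hguc δ hδ
    set B : Set ℂ := ⋃ a ∈ p₀.roots.toFinset, (fun z => z - a) '' K with hB
    have hBd : Dense Bᶜ := by
      rw [hB]
      classical
      induction p₀.roots.toFinset using Finset.induction with
      | empty => simp [dense_univ]
      | @insert a s hnotmem ih =>
        rw [Finset.set_biUnion_insert, Set.compl_union]
        have h1 : Dense ((fun z => z - a) '' K)ᶜ := by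
          rw [← interior_eq_empty_iff_dense_compl]
          have : (fun z : ℂ => z - a) '' K = (Homeomorph.addRight (-a)) '' K := by
            ext z; simp [sub_eq_add_neg]
          rw [this, ← Homeomorph.image_interior, hint, Set.image_empty]
        have h2 : IsOpen ((fun z : ℂ => z - a) '' K)ᶜ := by
          rw [isOpen_compl_iff]
          exact (hK.image (continuous_id.sub continuous_const)).isClosed
        exact h1.inter_of_isOpen_left ih h2
    obtain ⟨w, hwB, hwball⟩ := hBd.exists_mem_open (isOpen_ball (x := (0:ℂ)) (ε := min d η₀))
      ⟨0, by simp [hdpos, hη₀pos, lt_min_iff]⟩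
    simp only [mem_ball, dist_zero_right] at hwball
    refine ⟨p₀.comp (X - C w), q₀.comp (X - C w), ?_, ?_, ?_⟩
    · intro z hz
      rw [eval_comp]
      simp only [eval_sub, eval_X, eval_C]
      exact hη₀ (mem_cthickening_of_dist_le (z - w) z η₀ K hz
        (by rw [Complex.dist_eq]; simpa using le_of_lt (lt_of_lt_of_le hwball (min_le_right _ _))))
    · intro z hz
      rw [eval_comp]
      simp only [eval_sub, eval_X, eval_C]
      intro h0
      apply hwB
      have ha : (z - w) ∈ p₀.roots.toFinset :=
        Multiset.mem_toFinset.mpr ((Polynomial.mem_roots hp0).mpr h0)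
      rw [hB]
      exact Set.mem_biUnion ha ⟨z, hz, by ring⟩
    · intro z hz
      rw [eval_comp, eval_comp]
      simp only [eval_sub, eval_X, eval_C]
      have hzK' : z ∈ K' := self_subset_cthickening K hz
      have hzwK' : z - w ∈ K' := mem_cthickening_of_dist_le (z - w) z η₀ K hz
        (by rw [Complex.dist_eq]; simpa using le_of_lt (lt_of_lt_of_le hwball (min_le_right _ _)))
      have := hd z hzK' (z - w) hzwK'
        (by rw [Complex.dist_eq]; simpa using lt_of_lt_of_le hwball (min_le_left _ _))
      rwa [Complex.dist_eq] at this

/-- Invertible elements are dense in `RK K` when `K` has empty interior. -/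
lemma invApprox (K : Set ℂ) (hK : IsCompact K) (hint : interior K = ∅)
    (f : C(K, ℂ)) (hf : f ∈ RK K) (δ : ℝ) (hδ : 0 < δ) :
    ∃ r g : C(K, ℂ), r ∈ RK K ∧ g ∈ RK K ∧ r * g = 1 ∧
      ∀ x : K, ‖f x - r x‖ < δ ∧ r x ≠ 0 := by
  haveI : CompactSpace K := isCompact_iff_compactSpace.mp hK
  rw [RK, Metric.mem_closure_iff] at hf
  obtain ⟨f₀, hf₀mem, hdist⟩ := hf (δ/2) (by positivity)
  obtain ⟨p₀, q₀, hq₀, hf₀⟩ := hf₀mem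
  obtain ⟨P, Q, hQ, hP, happrox⟩ := ratApprox K hK hint p₀ q₀ hq₀ (δ/2) (by positivity)
  have hrc : Continuous fun z : K => P.eval (z : ℂ) / Q.eval (z : ℂ) :=
    (P.continuous.comp continuous_subtype_val).div
      (Q.continuous.comp continuous_subtype_val) (fun z => hQ z z.2)
  have hgc : Continuous fun z : K => Q.eval (z : ℂ) / P.eval (z : ℂ) :=
    (Q.continuous.comp continuous_subtype_val).div
      (P.continuous.comp continuous_subtype_val) (fun z => hP z z.2)
  refine ⟨⟨_, hrc⟩, ⟨_, hgc⟩, subset_closure ⟨P, Q, hQ, fun z => rfl⟩,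
    subset_closure ⟨Q, P, hP, fun z => rfl⟩, ?_, ?_⟩
  · ext x
    simp only [ContinuousMap.mul_apply, ContinuousMap.coe_mk, ContinuousMap.one_apply]
    rw [div_mul_div_comm, mul_comm (eval (x:ℂ) P)]
    exact div_self (mul_ne_zero (hQ _ x.2) (hP _ x.2))
  · intro x
    constructor
    · have h1 : ‖f x - f₀ x‖ < δ/2 := by
        calc ‖f x - f₀ x‖ = dist (f x) (f₀ x) := (Complex.dist_eq _ _).symm
          _ ≤ dist f f₀ := ContinuousMap.dist_apply_le_dist x
          _ < δ/2 := hdist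
      have h2 : ‖f₀ x - P.eval (x:ℂ) / Q.eval (x:ℂ)‖ < δ/2 := by
        rw [hf₀ x]; exact happrox _ x.2
      calc ‖f x - P.eval (x:ℂ) / Q.eval (x:ℂ)‖
          ≤ ‖f x - f₀ x‖ + ‖f₀ x - P.eval (x:ℂ) / Q.eval (x:ℂ)‖ := by
            simpa using norm_sub_le_norm_sub_add_norm_sub (f x) (f₀ x) (P.eval (x:ℂ) / Q.eval (x:ℂ))
        _ < δ/2 + δ/2 := add_lt_add h1 h2
        _ = δ := by ring
    · exact div_ne_zero (hP _ x.2) (hQ _ x.2)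

lemma keyIneq (K : Set ℂ) (hK : IsCompact K)
    (p : K) (μ : Measure K) [IsProbabilityMeasure μ]
    (E : Set K) (hEm : MeasurableSet E)
    (r : C(K, ℂ)) (δ' M ε : ℝ) (hδ'pos : 0 < δ') (hδ'le : δ' ≤ 1/2)
    (hM0 : 0 ≤ M)
    (hrbound : ∀ x : K, ‖r x‖ ≤ Real.exp M)
    (hrne : ∀ x : K, r x ≠ 0)
    (hrE : ∀ x ∈ E, ‖r x‖ ≤ δ')
    (hrp : 1 - δ' ≤ ‖r p‖)
    (hAS : Real.log (‖r p‖) = ∫ x, Real.log (‖r x‖) ∂μ)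
    (hε : ε = (μ E).toReal) :
    Real.log (1 - δ') ≤ ε * Real.log δ' + M := by
  haveI : CompactSpace K := isCompact_iff_compactSpace.mp hK
  have habs_pos : ∀ x : K, 0 < ‖r x‖ := fun x =>
    norm_pos_iff.mpr (hrne x)
  have hlog_cont : Continuous fun x : K => Real.log (‖r x‖) := by
    rw [continuous_iff_continuousAt]
    intro x
    have houter : ContinuousAt Real.log (‖r x‖) :=
      Real.continuousAt_log (habs_pos x).ne'
    exact ContinuousAt.comp (x := x) (g := Real.log)
      (f := fun x : K => ‖r x‖) houter
      (continuous_norm.comp r.continuous).continuousAt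
  have h1 : Integrable (fun x : K => Real.log (‖r x‖)) μ :=
    hlog_cont.integrable_of_hasCompactSupport
      (IsClosed.isCompact (isClosed_tsupport _))
  have h2 : Integrable (fun x : K => E.indicator (fun _ => Real.log δ') x + M) μ :=
    ((integrable_const (Real.log δ')).indicator hEm).add (integrable_const M)
  have hpt : ∀ x : K, Real.log (‖r x‖) ≤
      E.indicator (fun _ => Real.log δ') x + M := by
    intro x
    by_cases hx : x ∈ E
    · rw [Set.indicator_of_mem hx]
      have : Real.log (‖r x‖) ≤ Real.log δ' :=
        Real.log_le_log (habs_pos x) (hrE x hx)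
      linarith
    · rw [Set.indicator_of_notMem hx]
      have : Real.log (‖r x‖) ≤ M := by
        calc Real.log (‖r x‖) ≤ Real.log (Real.exp M) :=
          Real.log_le_log (habs_pos x) (hrbound x)
        _ = M := Real.log_exp M
      linarith
  have hint2 : ∫ x, (E.indicator (fun _ => Real.log δ') x + M) ∂μ
      = (μ E).toReal * Real.log δ' + M := by
    rw [integral_add ((integrable_const (Real.log δ')).indicator hEm) (integrable_const M)]
    rw [integral_indicator_const _ hEm, integral_const]
    simp [measure_univ, smul_eq_mul, Measure.real]
  calc Real.log (1 - δ') ≤ Real.log (‖r p‖) :=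
        Real.log_le_log (by linarith) hrp
    _ = ∫ x, Real.log (‖r x‖) ∂μ := hAS
    _ ≤ ∫ x, (E.indicator (fun _ => Real.log δ') x + M) ∂μ :=
        integral_mono h1 h2 hpt
    _ = ε * Real.log δ' + M := by rw [hint2, hε]


/-- If `K` is a compact plane set with empty interior such that `R(K)` is normal, then
the only Arens–Singer measures for `R(K)` are the unit point masses. -/
theorem stmt10 (K : Set ℂ) (hK : IsCompact K) (hint : interior K = ∅)
    (hnormal : ∀ K0 K1 : Set K, IsClosed K0 → IsClosed K1 → Disjoint K0 K1 →
      ∃ f ∈ RK K, (∀ x ∈ K1, f x = 1) ∧ ∀ x ∈ K0, f x = 0)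
    (p : K) (μ : Measure K) [IsProbabilityMeasure μ]
    (hAS : ∀ f ∈ RK K, (∃ g ∈ RK K, f * g = 1) →
      Real.log (‖f p‖) = ∫ x, Real.log (‖f x‖) ∂μ) :
    μ = Measure.dirac p := by
  haveI : CompactSpace K := isCompact_iff_compactSpace.mp hK
  -- Step 1: closed measurable sets not containing p are null
  have key : ∀ E : Set K, MeasurableSet E → IsClosed E → p ∉ E → μ E = 0 := by
    intro E hEm hEc hpE
    by_contra hE0
    set ε := (μ E).toReal with hε
    have hεpos : 0 < ε := ENNReal.toReal_pos hE0 (measure_ne_top μ E)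
    obtain ⟨f, hfRK, hf1, hf0⟩ := hnormal E {p} hEc isClosed_singleton
      (by simp [Set.disjoint_singleton_right, hpE])
    have hfp : f p = 1 := hf1 p rfl
    set M : ℝ := Real.log (‖f‖ + 1) with hM
    have hM0 : 0 ≤ M := Real.log_nonneg (by linarith [norm_nonneg f])
    set C : ℝ := (Real.log (1/2) - M) / ε with hC
    set δ' : ℝ := min (1/2) (Real.exp C / 2) with hδ'
    have hδ'pos : 0 < δ' := lt_min (by norm_num) (by positivity)
    have hδ'le : δ' ≤ 1/2 := min_le_left _ _
    obtain ⟨r, g, hrRK, hgRK, hrg, hbound⟩ := invApprox K hK hint f hfRK δ' hδ'pos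
    have hrbound : ∀ x : K, ‖r x‖ ≤ Real.exp M := by
      intro x
      have h1 := (hbound x).1
      have h2 : ‖f x‖ ≤ ‖f‖ := by
        exact f.norm_coe_le_norm x
      have h3 : ‖r x‖ ≤ ‖f x‖ + ‖f x - r x‖ := by
        have h4 := norm_sub_norm_le (r x) (f x)
        rw [norm_sub_rev] at h4
        linarith
      rw [hM, Real.exp_log (by linarith [norm_nonneg f])]
      linarith
    have hrE : ∀ x ∈ E, ‖r x‖ ≤ δ' := by
      intro x hx
      have := (hbound x).1
      rw [hf0 x hx, zero_sub, norm_neg] at this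
      exact this.le
    have hrp : 1 - δ' ≤ ‖r p‖ := by
      have h1 := (hbound p).1
      rw [hfp] at h1
      have h2 := norm_sub_norm_le (1:ℂ) (r p)
      simp only [norm_one] at h2
      linarith
    have hineq := keyIneq K hK p μ E hEm r δ' M ε hδ'pos hδ'le hM0 hrbound
      (fun x => (hbound x).2) hrE hrp (hAS r hrRK ⟨g, hgRK, hrg⟩) hε
    -- contradiction
    have hlog1 : Real.log (1/2) ≤ Real.log (1 - δ') :=
      Real.log_le_log (by norm_num) (by linarith)
    have hlog2 : Real.log δ' < C := by
      have : δ' < Real.exp C := lt_of_le_of_lt (min_le_right _ _)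
        (by linarith [Real.exp_pos C])
      calc Real.log δ' < Real.log (Real.exp C) := Real.log_lt_log hδ'pos this
        _ = C := Real.log_exp C
    have hlog3 : ε * Real.log δ' < Real.log (1/2) - M := by
      have := mul_lt_mul_of_pos_left hlog2 hεpos
      rw [hC] at this
      rw [mul_div_cancel₀ _ hεpos.ne'] at this
      linarith
    linarith
  -- Step 2: complement of {p} is null
  have hcompl : μ {p}ᶜ = 0 := by
    have hunion : ({p}ᶜ : Set K) = ⋃ n : ℕ,
        Subtype.val ⁻¹' {z : ℂ | 1/(n+1) ≤ dist z (p : ℂ)} := by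
      ext x
      simp only [Set.mem_compl_iff, Set.mem_singleton_iff, Set.mem_iUnion,
        Set.mem_preimage, Set.mem_setOf_eq]
      constructor
      · intro hxp
        have hd : 0 < dist (x : ℂ) (p : ℂ) := by
          rw [dist_pos]
          exact fun h => hxp (Subtype.ext h)
        obtain ⟨n, hn⟩ := exists_nat_one_div_lt hd
        exact ⟨n, le_of_lt hn⟩
      · intro ⟨n, hn⟩ hxp
        rw [hxp] at hn
        simp at hn
        have : (0:ℝ) < 1/(n+1) := by positivity
        linarith
    rw [hunion]
    refine measure_iUnion_null fun n => key _ ?_ ?_ ?_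
    · exact measurable_subtype_coe (isClosed_le continuous_const (continuous_id.dist continuous_const)).measurableSet
    · exact (isClosed_le continuous_const (continuous_id.dist continuous_const)).preimage continuous_subtype_val
    · simp only [Set.mem_preimage, Set.mem_setOf_eq, dist_self, not_le]
      positivity
  -- Step 3: conclude
  ext s hs
  have hsp : MeasurableSet ({p} : Set K) := by
    have : ({p} : Set K) = Subtype.val ⁻¹' {(p : ℂ)} := by
      ext x; simp [Subtype.ext_iff]
    rw [this]
    exact measurable_subtype_coe (measurableSet_singleton _)
  have hdiff : μ (s \ {p}) = 0 :=
    measure_mono_null (Set.diff_subset_compl s {p}) hcompl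
  have hsplit : μ s = μ (s ∩ {p}) := by
    have := measure_inter_add_diff s hsp (μ := μ)
    rw [hdiff, add_zero] at this
    exact this.symm
  by_cases hp : p ∈ s
  · have h1 : s ∩ {p} = {p} := by
      ext x; simp only [Set.mem_inter_iff, Set.mem_singleton_iff]
      exact ⟨fun h => h.2, fun h => ⟨h ▸ hp, h⟩⟩
    have h2 : μ ({p} : Set K) = 1 :=
      (prob_compl_eq_zero_iff (μ := μ) hsp).mp hcompl
    rw [hsplit, h1, h2, Measure.dirac_apply' _ hs, Set.indicator_of_mem hp]
    rfl
  · have h1 : s ∩ {p} = ∅ := by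
      ext x; simp only [Set.mem_inter_iff, Set.mem_singleton_iff, Set.mem_empty_iff_false,
        iff_false, not_and]
      intro hxs hxp
      exact hp (hxp ▸ hxs)
    rw [hsplit, h1, Measure.dirac_apply' _ hs, Set.indicator_of_notMem hp]
    simp
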